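/- arXiv:1901.00327 — 5 statements merged into one kernel-verified Lean document; each statement's English description precedes it below -/
import Mathlib

section
/- Let X be a compact metric space with Borel σ-algebra B, μ a Borel probability measure on X, and G a sub-σ-algebra of B. The relatively independent square μ⊠_G μ is concentrated on the diagonal Δ = {(x,x) : x ∈ X} of X×X if and only if the σ-algebras G and B coincide up to μ-null sets. -/
/-! If `μ ⊠_G μ` lives on the diagonal, then every rectangle `A × Aᶜ` is null, i.e.
`∫ f (1 - f) dμ = 0` for `f = E(1_A | G)`. As `0 ≤ f ≤ 1`, `f` only takes the values `0` and `1`,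
so `f = 1_B` with `B = {f = 1} ∈ G`; integrating `1_A` over `Bᶜ` and `1_{Aᶜ}` over `B` then
shows `A = B` mod `μ`.

Conversely, if every Borel set agrees mod `μ` with a set in `G`, then `E(1_U | G) = 1_U` for
every Borel `U`, so every rectangle `U × V` with disjoint sides is null. By second countability
the complement of the diagonal is a countable union of such rectangles with open sides. -/

open MeasureTheory Filter Topology Set
open scoped symmDiff Classical ENNReal NNReal

section Defs

variable {X : Type*}

/-- The pair `(x, y)` is (positively) asymptotic for `T`. -/
def IsAsymptoticPair [PseudoMetricSpace X] (T : X → X) (x y : X) : Prop :=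
  Tendsto (fun n : ℕ => dist (T^[n] x) (T^[n] y)) atTop (𝓝 0)

/-- Shannon entropy of the finite measurable partition of `X` given by the fibers of a
map `p` into a finite type. -/
noncomputable def partEntropy [MeasurableSpace X] (μ : Measure X) {ι : Type*} [Fintype ι]
    (p : X → ι) : ℝ :=
  ∑ i : ι, Real.negMulLog (μ (p ⁻¹' {i})).toReal

/-- Conditional Shannon entropy `H(P | F)` of the finite partition given by the fibers
of `p` with respect to the sub-σ-algebra `F`:
`H(P|F) = ∑_{A ∈ P} ∫ -E(1_A|F) log E(1_A|F) dμ`. -/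
noncomputable def condPartEntropy [MeasurableSpace X] (μ : Measure X)
    (F : MeasurableSpace X) {ι : Type*} [Fintype ι] (p : X → ι) : ℝ :=
  ∑ i : ι, ∫ x, Real.negMulLog ((μ[(p ⁻¹' {i}).indicator (fun _ => (1 : ℝ)) | F]) x) ∂μ

/-- The σ-algebra `σ(P^-)` generated by the partitions `T^{-n}P`, `n ≥ 1`
(the "past" of the partition given by the fibers of `p`). -/
def partPast (T : X → X) {ι : Type*} (p : X → ι) : MeasurableSpace X :=
  ⨆ n : ℕ, MeasurableSpace.comap (fun x => p (T^[n + 1] x)) ⊤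

/-- The σ-algebra `σ(P^T)` generated by the partitions `T^{-n}P`, `n ∈ ℤ`, where `S = T⁻¹`. -/
def partHull (T S : X → X) {ι : Type*} (p : X → ι) : MeasurableSpace X :=
  ⨆ n : ℕ,
    MeasurableSpace.comap (fun x => p (T^[n] x)) ⊤ ⊔
      MeasurableSpace.comap (fun x => p (S^[n] x)) ⊤

/-- Kolmogorov–Sinai entropy of a finite partition: `h_μ(P, T) = H(P | P^-)`. -/
noncomputable def partKS [MeasurableSpace X] (μ : Measure X) (T : X → X) {ι : Type*}
    [Fintype ι] (p : X → ι) : ℝ :=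
  condPartEntropy μ (partPast T p) p

/-- Kolmogorov–Sinai (measure-theoretic) entropy `h_μ(X, T)` of the system:
the supremum over all finite measurable partitions `P` of `h_μ(P, T)`. -/
noncomputable def ksEntropy [MeasurableSpace X] (μ : Measure X) (T : X → X) : ℝ≥0∞ :=
  ⨆ (k : ℕ) (p : X → Fin k) (_ : Measurable p), ENNReal.ofReal (partKS μ T p)

/-- The Pinsker σ-algebra `Π_μ`: the σ-algebra generated by all finite measurable
partitions with zero Kolmogorov–Sinai entropy. -/
def pinskerAlg [MeasurableSpace X] (μ : Measure X) (T : X → X) : MeasurableSpace X :=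
  ⨆ (k : ℕ) (p : X → Fin k) (_ : Measurable p) (_ : partKS μ T p = 0),
    MeasurableSpace.comap p ⊤

/-- Minimal cardinality of a subcover of `⋁_{i=0}^{n-1} T^{-i} C`, where `C` is a
finite cover of `X`. -/
noncomputable def coverNum (T : X → X) {k : ℕ} (C : Fin k → Set X) (n : ℕ) : ℕ :=
  sInf {m : ℕ | ∃ f : Fin m → Fin n → Fin k,
    (⋃ j : Fin m, ⋂ i : Fin n, T^[(i : ℕ)] ⁻¹' C (f j i)) = Set.univ}

/-- Topological entropy of a finite cover `C`:
`h(C, T) = inf_n (1/n) log N(⋁_{i=0}^{n-1} T^{-i} C) = lim_n (1/n) log N(...)`. -/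
noncomputable def coverEntropyOf (T : X → X) {k : ℕ} (C : Fin k → Set X) : ℝ :=
  ⨅ n : ℕ, Real.log (coverNum T C (n + 1)) / (n + 1)

/-- `(x, y)` is a topological entropy pair: `x ≠ y` and every two-set open cover
`{Uᶜ, Vᶜ}`, where `U` and `V` are disjoint closed neighbourhoods of `x` and `y`,
has positive topological entropy. -/
def IsEntropyPair [TopologicalSpace X] (T : X → X) (x y : X) : Prop :=
  x ≠ y ∧ ∀ U V : Set X, IsClosed U → IsClosed V → U ∈ 𝓝 x → V ∈ 𝓝 y → Disjoint U V →
    0 < coverEntropyOf T ![Uᶜ, Vᶜ]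

/-- `(x, y)` is an entropy pair for the invariant measure `μ`: `x ≠ y` and every two-set
Borel partition `(A, Aᶜ)` with `x ∈ interior A` and `y ∈ interior Aᶜ` has positive
entropy with respect to `T` and `μ`. -/
def IsMuEntropyPair [TopologicalSpace X] [MeasurableSpace X] (T : X → X) (μ : Measure X)
    (x y : X) : Prop :=
  x ≠ y ∧ ∀ A : Set X, MeasurableSet A → x ∈ interior A → y ∈ interior Aᶜ →
    0 < partKS μ T (fun z => if z ∈ A then (0 : Fin 2) else 1)

/-- `ν` is the relatively independent square `μ ⊠_G μ` of `μ` over the sub-σ-algebra `G`: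
it is determined by `ν(A × B) = ∫ E(1_A|G) · E(1_B|G) dμ` for all Borel sets `A`, `B`. -/
def IsCondSquare (G : MeasurableSpace X) [m0 : MeasurableSpace X] (μ : Measure X)
    (ν : Measure (X × X)) : Prop :=
  ∀ A B : Set X, MeasurableSet[m0] A → MeasurableSet[m0] B →
    ν (A ×ˢ B) = ENNReal.ofReal
      (∫ x, (μ[A.indicator (fun _ => (1 : ℝ)) | G]) x *
            (μ[B.indicator (fun _ => (1 : ℝ)) | G]) x ∂μ)

/-- The σ-algebra `m₁` is contained in `m₂` modulo `μ`-null sets. -/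
def SubModNull [MeasurableSpace X] (μ : Measure X) (m₁ m₂ : MeasurableSpace X) : Prop :=
  ∀ A : Set X, MeasurableSet[m₁] A → ∃ B : Set X, MeasurableSet[m₂] B ∧ μ (A ∆ B) = 0

end Defs

section Defs2

variable {X : Type*}

/-- The σ-algebra `F^- = ⋁_{n ≥ 1} T^{-n} F`. -/
def pastAlg (T : X → X) (F : MeasurableSpace X) : MeasurableSpace X :=
  ⨆ n : ℕ, MeasurableSpace.comap (T^[n + 1]) F

/-- The σ-algebra `F^T = ⋁_{n ∈ ℤ} T^{-n} F`, where `S = T⁻¹`. -/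
def hullAlg (T S : X → X) (F : MeasurableSpace X) : MeasurableSpace X :=
  ⨆ n : ℕ, MeasurableSpace.comap (T^[n]) F ⊔ MeasurableSpace.comap (S^[n]) F

/-- `P` is (the σ-algebra of) an *excellent* measurable partition for `(X, μ, T)` (here
`S = T⁻¹`): it is generating (`σ(P^T) = 𝒜` mod `μ`) and it is generated by an increasing
sequence of finite measurable partitions `Pₙ ↑ P` with `H(Pₙ|Pₙ⁻) − H(Pₙ|P⁻) → 0`. -/
def IsExcellentPartition (P : MeasurableSpace X) [m0 : MeasurableSpace X] (μ : Measure X)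
    (T S : X → X) : Prop :=
  P ≤ m0 ∧ SubModNull μ m0 (hullAlg T S P) ∧
  ∃ (m : ℕ → ℕ) (Q : ∀ n : ℕ, X → Fin (m n)),
    (∀ n, Measurable (Q n)) ∧
    Monotone (fun n => MeasurableSpace.comap (Q n) (⊤ : MeasurableSpace (Fin (m n)))) ∧
    (⨆ n : ℕ, MeasurableSpace.comap (Q n) (⊤ : MeasurableSpace (Fin (m n)))) = P ∧
    Tendsto (fun n => condPartEntropy μ (partPast T (Q n)) (Q n) -
      condPartEntropy μ (pastAlg T P) (Q n)) atTop (𝓝 0)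

end Defs2

theorem measure_compl_diagonal_eq_zero {X : Type*} [TopologicalSpace X] [T2Space X]
    [SecondCountableTopology X] [MeasurableSpace (X × X)] {ν : Measure (X × X)}
    (h : ∀ U V : Set X, IsOpen U → IsOpen V → Disjoint U V → ν (U ×ˢ V) = 0) :
    ν (diagonal X)ᶜ = 0 := by
  choose U V hU hV hpU hpV hUV using fun p : ↥(diagonal X)ᶜ => t2_separation p.2
  obtain ⟨T, hT, hcover⟩ :=
    TopologicalSpace.isOpen_iUnion_countable (fun p => U p ×ˢ V p) fun p => (hU p).prod (hV p)
  refine measure_mono_null (fun p hp => ?_)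
    ((measure_biUnion_null_iff hT).2 fun p _ => h _ _ (hU p) (hV p) (hUV p))
  rw [hcover]
  exact mem_iUnion.2 ⟨⟨p, hp⟩, hpU _, hpV _⟩

namespace MeasureTheory

variable {X : Type*} {m m0 : MeasurableSpace X} {μ : Measure X} {A B : Set X}

theorem condExp_indicator_nonneg : 0 ≤ᵐ[μ] μ[A.indicator (fun _ => (1 : ℝ)) | m] :=
  condExp_nonneg (ae_of_all μ (indicator_nonneg fun _ _ => zero_le_one))

variable [IsFiniteMeasure μ]

theorem condExp_indicator_compl (hm : m ≤ m0) (hA : MeasurableSet A) :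
    μ[Aᶜ.indicator (fun _ => (1 : ℝ)) | m] =ᵐ[μ] 1 - μ[A.indicator (fun _ => (1 : ℝ)) | m] := by
  rw [indicator_compl]
  refine (condExp_sub (integrable_const _) ((integrable_const _).indicator hA) m).trans ?_
  rw [condExp_const hm]
  rfl

theorem condExp_indicator_le_one (hm : m ≤ m0) (hA : MeasurableSet A) :
    μ[A.indicator (fun _ => (1 : ℝ)) | m] ≤ᵐ[μ] 1 := by
  filter_upwards [condExp_indicator_compl hm hA, condExp_indicator_nonneg (A := Aᶜ) (m := m)]
    with x hc h0
  simp only [hc, Pi.sub_apply, Pi.zero_apply, sub_nonneg] at h0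
  exact h0

theorem condExp_indicator_ae_eq_indicator_of_integral_mul_compl_nonpos (hm : m ≤ m0)
    (hA : MeasurableSet A)
    (h : ∫ x, μ[A.indicator (fun _ => (1 : ℝ)) | m] x *
      μ[Aᶜ.indicator (fun _ => (1 : ℝ)) | m] x ∂μ ≤ 0) :
    μ[A.indicator (fun _ => (1 : ℝ)) | m] =ᵐ[μ]
      (μ[A.indicator (fun _ => (1 : ℝ)) | m] ⁻¹' {1}).indicator (fun _ => 1) := by
  set f := μ[A.indicator (fun _ => (1 : ℝ)) | m]
  have hf0 : 0 ≤ᵐ[μ] f := condExp_indicator_nonneg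
  have hf1 : f ≤ᵐ[μ] 1 := condExp_indicator_le_one hm hA
  have hfg : ∀ᵐ x ∂μ, 0 ≤ f x * (1 - f x) := by
    filter_upwards [hf0, hf1] with x h0 h1
    exact mul_nonneg h0 (sub_nonneg.2 h1)
  have hint : Integrable (fun x => f x * (1 - f x)) μ := by
    refine integrable_condExp.mul_bdd (c := 1)
      (aestronglyMeasurable_const.sub (stronglyMeasurable_condExp.mono hm).aestronglyMeasurable) ?_
    filter_upwards [hf0, hf1] with x h0 h1
    simp only [Pi.zero_apply, Pi.one_apply] at h0 h1
    rw [Real.norm_eq_abs, abs_le]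
    constructor <;> linarith
  have hzero : (fun x => f x * (1 - f x)) =ᵐ[μ] 0 := by
    refine (integral_eq_zero_iff_of_nonneg_ae hfg hint).1
      (le_antisymm ?_ (integral_nonneg_of_ae hfg))
    calc ∫ x, f x * (1 - f x) ∂μ = ∫ x, f x * μ[Aᶜ.indicator (fun _ => (1 : ℝ)) | m] x ∂μ :=
          integral_congr_ae ((condExp_indicator_compl hm hA).mono fun x hx => by
            simp only [hx]; rfl)
      _ ≤ 0 := h
  filter_upwards [hzero] with x hx
  rcases mul_eq_zero.1 hx with h | h
  · simp [h]
  · have : f x = 1 := by linarith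
    simp [this]

theorem measure_diff_eq_zero_of_condExp_indicator_ae_eq (hm : m ≤ m0)
    (hA : MeasurableSet A) (hB : MeasurableSet[m] B)
    (h : μ[A.indicator (fun _ => (1 : ℝ)) | m] =ᵐ[μ] B.indicator (fun _ => 1)) :
    μ (A \ B) = 0 := by
  have key := setIntegral_condExp hm ((integrable_const (μ := μ) (1 : ℝ)).indicator hA) hB.compl
  rw [setIntegral_congr_ae (hm _ hB.compl) (h.mono fun x hx _ => hx),
    setIntegral_indicator (hm _ hB), setIntegral_indicator hA] at key
  simp only [compl_inter_self, Measure.restrict_empty, integral_const, measureReal_zero,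
    smul_eq_mul, mul_one, MeasurableSet.univ, measureReal_restrict_apply, univ_inter] at key
  rw [sdiff_eq, inter_comm]
  exact (measureReal_eq_zero_iff (measure_ne_top _ _)).1 key.symm

theorem measure_symmDiff_eq_zero_of_condExp_indicator_ae_eq (hm : m ≤ m0)
    (hA : MeasurableSet A) (hB : MeasurableSet[m] B)
    (h : μ[A.indicator (fun _ => (1 : ℝ)) | m] =ᵐ[μ] B.indicator (fun _ => 1)) :
    μ (A ∆ B) = 0 := by
  have hc : μ[Aᶜ.indicator (fun _ => (1 : ℝ)) | m] =ᵐ[μ] Bᶜ.indicator (fun _ => 1) := by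
    filter_upwards [condExp_indicator_compl hm hA, h] with x h1 h2
    rw [h1, Pi.sub_apply, h2, indicator_compl]
    rfl
  have hBA := measure_diff_eq_zero_of_condExp_indicator_ae_eq hm hA.compl hB.compl hc
  rw [compl_sdiff_compl] at hBA
  rw [symmDiff_def]
  exact measure_union_null (measure_diff_eq_zero_of_condExp_indicator_ae_eq hm hA hB h) hBA

theorem condExp_indicator_ae_eq_self_of_subModNull (hm : m ≤ m0) (hsub : SubModNull μ m0 m)
    (hA : MeasurableSet A) :
    μ[A.indicator (fun _ => (1 : ℝ)) | m] =ᵐ[μ] A.indicator (fun _ => 1) := by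
  obtain ⟨B, hB, hAB⟩ := hsub A hA
  have hind : A.indicator (fun _ => (1 : ℝ)) =ᵐ[μ] B.indicator (fun _ => 1) :=
    indicator_ae_eq_of_ae_eq_set (measure_symmDiff_eq_zero_iff.1 hAB)
  exact condExp_of_aestronglyMeasurable' hm ⟨_, stronglyMeasurable_const.indicator hB, hind⟩
    ((integrable_const _).indicator hA)

theorem integral_condExp_indicator_mul_eq_zero_of_disjoint (hm : m ≤ m0)
    (hsub : SubModNull μ m0 m) (hA : MeasurableSet A) (hB : MeasurableSet B)
    (hAB : Disjoint A B) :
    ∫ x, μ[A.indicator (fun _ => (1 : ℝ)) | m] x * μ[B.indicator (fun _ => (1 : ℝ)) | m] x ∂μ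
      = 0 := by
  refine (integral_congr_ae ((condExp_indicator_ae_eq_self_of_subModNull hm hsub hA).mul
    (condExp_indicator_ae_eq_self_of_subModNull hm hsub hB))).trans ?_
  simp_rw [Pi.mul_apply, ← inter_indicator_mul, hAB.inter_eq, indicator_empty, integral_zero]

end MeasureTheory

/-- The relatively independent square `μ ⊠_G μ` is concentrated on the
diagonal of `X × X` if and only if the σ-algebras `G` and `B` coincide up to `μ`-null
sets. -/
theorem condSquare_diagonal_iff
    {X : Type*} (G : MeasurableSpace X) [MetricSpace X] [CompactSpace X]
    [m0 : MeasurableSpace X] [BorelSpace X]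
    (μ : Measure X) [IsProbabilityMeasure μ] (hG : G ≤ m0)
    (ν : Measure (X × X)) (hν : IsCondSquare G μ ν) :
    ν {p : X × X | p.1 ≠ p.2} = 0 ↔ SubModNull μ m0 G := by
  constructor
  · intro hdiag A hA
    have hrect : ν (A ×ˢ Aᶜ) = 0 :=
      measure_mono_null (prod_subset_compl_diagonal_iff_disjoint.2 disjoint_compl_right) hdiag
    rw [hν A Aᶜ hA hA.compl, ENNReal.ofReal_eq_zero] at hrect
    have hB : MeasurableSet[G] (μ[A.indicator (fun _ => (1 : ℝ)) | G] ⁻¹' {1}) :=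
      stronglyMeasurable_condExp.measurable (measurableSet_singleton 1)
    exact ⟨_, hB, measure_symmDiff_eq_zero_of_condExp_indicator_ae_eq hG hA hB
      (condExp_indicator_ae_eq_indicator_of_integral_mul_compl_nonpos hG hA hrect)⟩
  · intro hsub
    refine measure_compl_diagonal_eq_zero fun U V hU hV hUV => ?_
    rw [hν U V hU.measurableSet hV.measurableSet,
      integral_condExp_indicator_mul_eq_zero_of_disjoint hG hsub hU.measurableSet
        hV.measurableSet hUV, ENNReal.ofReal_zero]
end

section
/- Let X be a compact metric space with Borel σ-algebra B, μ a Borel probability measure on X, G a sub-σ-algebra of B, and f a bounded G-measurable Borel function on X. Then f(x) = f(y) for μ⊠_G μ-almost all (x,y) ∈ X×X. -/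
open MeasureTheory Filter Topology Set
open scoped symmDiff Classical ENNReal NNReal

/-- If `f` is a bounded `G`-measurable function on `X`, then
`f(x) = f(y)` for `μ ⊠_G μ`-almost all pairs `(x, y)`. -/
theorem condSquare_ae_eq_of_measurable
    {X : Type*} (G : MeasurableSpace X) [MetricSpace X] [CompactSpace X]
    [m0 : MeasurableSpace X] [BorelSpace X]
    (μ : Measure X) [IsProbabilityMeasure μ] (hG : G ≤ m0)
    (f : X → ℝ) (hf : Measurable[G] f) (hbd : ∃ C : ℝ, ∀ x, |f x| ≤ C)
    (ν : Measure (X × X)) (hν : IsCondSquare G μ ν) :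
    ∀ᵐ p ∂ν, f p.1 = f p.2 := by
  -- Key: for any `G`-measurable set `A`, `ν (A ×ˢ Aᶜ) = 0`.
  have key : ∀ A : Set X, MeasurableSet[G] A → ν (A ×ˢ Aᶜ) = 0 := by
    intro A hA
    have hA0 : MeasurableSet A := hG _ hA
    rw [hν A Aᶜ hA0 hA0.compl]
    have h1 : μ[(A.indicator fun _ => (1 : ℝ)) | G] = A.indicator fun _ => 1 :=
      condExp_of_stronglyMeasurable hG (stronglyMeasurable_const.indicator hA)
        ((integrable_const (1 : ℝ)).indicator hA0)
    have h2 : μ[(Aᶜ.indicator fun _ => (1 : ℝ)) | G] = Aᶜ.indicator fun _ => 1 :=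
      condExp_of_stronglyMeasurable hG (stronglyMeasurable_const.indicator hA.compl)
        ((integrable_const (1 : ℝ)).indicator hA0.compl)
    rw [h1, h2]
    have hz : ∀ x, (A.indicator (fun _ => (1 : ℝ)) x) * (Aᶜ.indicator (fun _ => (1 : ℝ)) x)
        = 0 := by
      intro x
      by_cases hx : x ∈ A <;> simp [Set.indicator_apply, hx]
    simp [hz]
  -- The sets `A q = {x | f x ≤ q}` for rational `q`.
  set A : ℚ → Set X := fun q => {x | f x ≤ (q : ℝ)} with hAdef
  have hAq : ∀ q : ℚ, MeasurableSet[G] (A q) := fun q =>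
    @measurableSet_le _ _ _ _ _ G _ _ _ f (fun _ => (q : ℝ)) hf measurable_const
  have hcover : {p : X × X | f p.1 ≠ f p.2} ⊆
      ⋃ q : ℚ, (A q ×ˢ (A q)ᶜ ∪ (A q)ᶜ ×ˢ (A q)) := by
    rintro ⟨x, y⟩ hxy
    rcases lt_or_gt_of_ne hxy with h | h
    · obtain ⟨q, hq1, hq2⟩ := exists_rat_btwn h
      exact Set.mem_iUnion.2 ⟨q, Or.inl ⟨hq1.le, not_le.2 hq2⟩⟩
    · obtain ⟨q, hq1, hq2⟩ := exists_rat_btwn h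
      exact Set.mem_iUnion.2 ⟨q, Or.inr ⟨not_le.2 hq2, hq1.le⟩⟩
  have hnull : ν (⋃ q : ℚ, (A q ×ˢ (A q)ᶜ ∪ (A q)ᶜ ×ˢ (A q))) = 0 := by
    refine measure_iUnion_null fun q => measure_union_null (key _ (hAq q)) ?_
    have := key (A q)ᶜ (hAq q).compl
    rwa [compl_compl] at this
  rw [ae_iff]
  exact measure_mono_null hcover hnull
end

section
/- Let X be a compact metric space with Borel σ-algebra B, μ a Borel probability measure on X, and (G_n)_{n≥1} a decreasing sequence of sub-σ-algebras of B with G = ⋂_{n≥1} G_n. Then for all Borel sets A, B ⊆ X one has μ⊠_{G_n} μ(A×B) → μ⊠_G μ(A×B) as n → ∞, and the sequence of measures (μ⊠_{G_n} μ)_{n≥1} converges weakly to μ⊠_G μ. -/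
open MeasureTheory Filter Topology Set
open scoped symmDiff Classical ENNReal NNReal

/-!
Conditional expectation with respect to `G` is the orthogonal projection of `L²(μ)` onto the
closed subspace of `G`-measurable functions. For a decreasing sequence `Gₙ` these subspaces
decrease to the subspace of `⨅ n, Gₙ`-measurable functions (a function that has a
`Gₙ`-measurable version for every `n` has a common `⨅ n, Gₙ`-measurable one), so the
projections converge strongly, and hence so do the inner products
`μ ⊠_{Gₙ} μ (A × B) = ⟪E(1_A | Gₙ), E(1_B | Gₙ)⟫`.

Weak convergence follows because on a compact metric space every continuous function on
`X × X` is uniformly close to a step function on finitely many Borel rectangles.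
-/

namespace Submodule

variable {𝕜 E : Type*} [RCLike 𝕜] [NormedAddCommGroup E] [InnerProductSpace 𝕜 E] [CompleteSpace E]

theorem starProjection_tendsto_iInf {ι : Type*} [Preorder ι] (K : ι → Submodule 𝕜 E)
    [∀ i, (K i).HasOrthogonalProjection] [(⨅ i, K i).HasOrthogonalProjection]
    (hK : Antitone K) (x : E) :
    Tendsto (fun i => (K i).starProjection x) atTop (𝓝 ((⨅ i, K i).starProjection x)) := by
  have hclosure : (⨆ i, (K i)ᗮ).topologicalClosure = (⨅ i, K i)ᗮ := by
    rw [← orthogonal_orthogonal_eq_closure, ← iInf_orthogonal]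
    simp only [orthogonal_orthogonal]
  have : (⨆ i, (K i)ᗮ).topologicalClosure.HasOrthogonalProjection := by
    rw [hclosure]; infer_instance
  have h := starProjection_tendsto_closure_iSup (fun i => (K i)ᗮ)
    (fun i j hij => orthogonal_le (hK hij)) x
  simp only [starProjection_orthogonal_val, hclosure] at h
  simpa using (tendsto_const_nhds (x := x)).sub h

end Submodule

namespace MeasureTheory

section Projection

variable {α E : Type*} {m0 : MeasurableSpace α} {μ : Measure α}
  [NormedAddCommGroup E] [CompleteSpace E] [SecondCountableTopology E]

theorem AEStronglyMeasurable.iInf_of_antitone {G : ℕ → MeasurableSpace α}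
    (hG : Antitone G) {f : α → E} (hf : ∀ n, AEStronglyMeasurable[G n] f μ) :
    AEStronglyMeasurable[⨅ n, G n] f μ := by
  choose g hg_meas hfg using hf
  -- `H` depends only on the tail of `g`, hence is `G m`-measurable for every `m`
  set H : α → E := fun x => limUnder atTop (fun k => g k x)
  have hH : ∀ m, StronglyMeasurable[G m] H := fun m => by
    have hshift : H = fun x => limUnder atTop (fun k => g (k + m) x) := by
      funext x
      exact congrArg lim
        ((map_map (m := (· + m)) (f := atTop)).symm.trans (by rw [map_add_atTop_eq_nat])).symm
    rw [hshift]
    exact @StronglyMeasurable.limUnder _ _ _ (G m) _ _ _ _ _ _ _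
      fun k => (hg_meas (k + m)).mono (hG (Nat.le_add_left m k))
  borelize E
  refine ⟨H, ?_, ?_⟩
  · refine Measurable.stronglyMeasurable fun s hs => ?_
    exact MeasurableSpace.measurableSet_iInf.2 fun m => (hH m).measurable hs
  · filter_upwards [ae_all_iff.2 hfg] with x hx
    simp only [H, ← hx]
    exact tendsto_const_nhds.limUnder_eq.symm

variable {𝕜 : Type*} [RCLike 𝕜] {G : ℕ → MeasurableSpace α}

theorem lpMeas_iInf_of_antitone [NormedSpace 𝕜 E] (hG : Antitone G) (p : ℝ≥0∞) :
    lpMeas E 𝕜 (⨅ n, G n) p μ = ⨅ n, lpMeas E 𝕜 (G n) p μ := by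
  ext f
  simp only [Submodule.mem_iInf, mem_lpMeas_iff_aestronglyMeasurable]
  exact ⟨fun hf n => hf.mono (iInf_le G n), AEStronglyMeasurable.iInf_of_antitone hG⟩

theorem tendsto_condExpL2_of_antitone [InnerProductSpace 𝕜 E] (hG : ∀ n, G n ≤ m0)
    (hGinf : ⨅ n, G n ≤ m0) (hmono : Antitone G) (f : α →₂[μ] E) :
    Tendsto (fun n => (condExpL2 E 𝕜 (hG n) f : α →₂[μ] E)) atTop
      (𝓝 (condExpL2 E 𝕜 hGinf f : α →₂[μ] E)) := by
  have := fun n => Fact.mk (hG n)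
  have := Fact.mk hGinf
  have hK : Antitone fun n => lpMeas E 𝕜 (G n) 2 μ := fun m n hmn f hf =>
    (mem_lpMeas_iff_aestronglyMeasurable.1 hf).mono (hmono hmn)
  have : (⨅ n, lpMeas E 𝕜 (G n) 2 μ).HasOrthogonalProjection := by
    rw [← lpMeas_iInf_of_antitone hmono]; infer_instance
  have h := Submodule.starProjection_tendsto_iInf _ hK f
  simp only [← lpMeas_iInf_of_antitone hmono] at h
  exact h

end Projection

section CondExp

variable {α : Type*} {m m0 : MeasurableSpace α} {μ : Measure α} [IsFiniteMeasure μ] {f g : α → ℝ}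

theorem integral_condExp_mul_condExp_eq_inner (hm : m ≤ m0) (hf : MemLp f 2 μ)
    (hg : MemLp g 2 μ) :
    ∫ x, μ[f|m] x * μ[g|m] x ∂μ =
      inner ℝ (condExpL2 ℝ ℝ hm hf.toLp : α →₂[μ] ℝ) (condExpL2 ℝ ℝ hm hg.toLp : α →₂[μ] ℝ) := by
  rw [L2.inner_def]
  refine integral_congr_ae ?_
  filter_upwards [hf.condExpL2_ae_eq_condExp (𝕜 := ℝ) hm, hg.condExpL2_ae_eq_condExp (𝕜 := ℝ) hm]
    with x hfx hgx
  simp [hfx, hgx, mul_comm]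

theorem tendsto_integral_condExp_mul_condExp_of_antitone {G : ℕ → MeasurableSpace α}
    (hG : ∀ n, G n ≤ m0) (hmono : Antitone G) (hf : MemLp f 2 μ) (hg : MemLp g 2 μ) :
    Tendsto (fun n => ∫ x, μ[f|G n] x * μ[g|G n] x ∂μ) atTop
      (𝓝 (∫ x, μ[f|⨅ n, G n] x * μ[g|⨅ n, G n] x ∂μ)) := by
  have hGinf : ⨅ n, G n ≤ m0 := (iInf_le G 0).trans (hG 0)
  simp only [integral_condExp_mul_condExp_eq_inner (hG _) hf hg,
    integral_condExp_mul_condExp_eq_inner hGinf hf hg]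
  exact (tendsto_condExpL2_of_antitone hG hGinf hmono _).inner
    (tendsto_condExpL2_of_antitone hG hGinf hmono _)

end CondExp

theorem SimpleFunc.exists_forall_dist_lt {X : Type*} [PseudoMetricSpace X] [CompactSpace X]
    [MeasurableSpace X] [OpensMeasurableSpace X] [Nonempty X] {δ : ℝ} (hδ : 0 < δ) :
    ∃ s : SimpleFunc X X, ∀ x, dist x (s x) < δ := by
  obtain ⟨e, he⟩ := TopologicalSpace.exists_dense_seq X
  obtain ⟨I, hI⟩ := isCompact_univ.elim_finite_subcover (fun k => Metric.ball (e k) δ)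
    (fun _ => Metric.isOpen_ball) fun x _ => by
      obtain ⟨k, hk⟩ := he.exists_dist_lt x hδ
      exact mem_iUnion.2 ⟨k, Metric.mem_ball.2 hk⟩
  refine ⟨SimpleFunc.nearestPt e (I.sup id), fun x => ?_⟩
  obtain ⟨k, hkI, hk⟩ := mem_iUnion₂.1 (hI (mem_univ x))
  rw [← edist_lt_ofReal, edist_comm]
  exact (SimpleFunc.edist_nearestPt_le e x (Finset.le_sup (f := id) hkI)).trans_lt
    (edist_lt_ofReal.2 (Metric.mem_ball'.1 hk))

theorem dist_integral_le_of_forall_dist_le {Z E : Type*} [MeasurableSpace Z]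
    [NormedAddCommGroup E] [NormedSpace ℝ E] (μ : Measure Z) [IsProbabilityMeasure μ]
    {f g : Z → E} (hf : Integrable f μ) (hg : Integrable g μ) {C : ℝ}
    (h : ∀ z, dist (f z) (g z) ≤ C) : dist (∫ z, f z ∂μ) (∫ z, g z ∂μ) ≤ C := by
  rw [dist_eq_norm, ← integral_sub hf hg]
  simpa using norm_integral_le_of_norm_le_const (μ := μ) (.of_forall fun z => by
    rw [← dist_eq_norm]; exact h z)

section Prod

variable {X Y : Type*} [MeasurableSpace X] [MeasurableSpace Y]

theorem integral_comp_simpleFunc_prod {X' Y' : Type*} (ρ : Measure (X × Y)) [IsFiniteMeasure ρ]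
    (s : SimpleFunc X X') (t : SimpleFunc Y Y') (φ : X' × Y' → ℝ) :
    ∫ p, φ (s p.1, t p.2) ∂ρ =
      ∑ a ∈ s.range, ∑ b ∈ t.range, ρ.real ((s ⁻¹' {a}) ×ˢ (t ⁻¹' {b})) * φ (a, b) := by
  have hrect : ∀ a b, MeasurableSet ((s ⁻¹' {a}) ×ˢ (t ⁻¹' {b})) := fun a b =>
    (s.measurableSet_fiber a).prod (t.measurableSet_fiber b)
  have hsum : (fun p : X × Y => φ (s p.1, t p.2)) = fun p => ∑ a ∈ s.range, ∑ b ∈ t.range,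
      ((s ⁻¹' {a}) ×ˢ (t ⁻¹' {b})).indicator (fun _ => φ (a, b)) p := by
    funext p
    rw [Finset.sum_eq_single_of_mem (s p.1) (s.mem_range_self _),
      Finset.sum_eq_single_of_mem (t p.2) (t.mem_range_self _)]
    · simp
    · intro b _ hb; simp [Ne.symm hb]
    · intro a _ ha; exact Finset.sum_eq_zero fun b _ => by simp [Ne.symm ha]
  rw [hsum, integral_finsetSum _ fun a _ => integrable_finsetSum _ fun b _ =>
    (integrable_const _).indicator (hrect a b)]
  refine Finset.sum_congr rfl fun a _ => ?_
  rw [integral_finsetSum _ fun b _ => (integrable_const _).indicator (hrect a b)]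
  refine Finset.sum_congr rfl fun b _ => ?_
  rw [integral_indicator_const _ (hrect a b), smul_eq_mul]

variable {ρ : ℕ → Measure (X × Y)} {ρ' : Measure (X × Y)}

theorem tendsto_integral_comp_simpleFunc_prod [∀ n, IsFiniteMeasure (ρ n)] [IsFiniteMeasure ρ']
    (h : ∀ A B, MeasurableSet A → MeasurableSet B →
      Tendsto (fun n => ρ n (A ×ˢ B)) atTop (𝓝 (ρ' (A ×ˢ B))))
    {X' Y' : Type*} (s : SimpleFunc X X') (t : SimpleFunc Y Y') (φ : X' × Y' → ℝ) :
    Tendsto (fun n => ∫ p, φ (s p.1, t p.2) ∂ρ n) atTop (𝓝 (∫ p, φ (s p.1, t p.2) ∂ρ')) := by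
  simp only [integral_comp_simpleFunc_prod]
  refine tendsto_finsetSum _ fun a _ => tendsto_finsetSum _ fun b _ => ?_
  refine Tendsto.mul_const _ ?_
  exact (ENNReal.tendsto_toReal (measure_ne_top _ _)).comp
    (h _ _ (s.measurableSet_fiber a) (t.measurableSet_fiber b))

theorem tendsto_integral_of_tendsto_measure_prod [PseudoMetricSpace X] [CompactSpace X]
    [OpensMeasurableSpace X] [PseudoMetricSpace Y] [CompactSpace Y] [OpensMeasurableSpace Y]
    [∀ n, IsProbabilityMeasure (ρ n)] [IsProbabilityMeasure ρ']
    (h : ∀ A B, MeasurableSet A → MeasurableSet B →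
      Tendsto (fun n => ρ n (A ×ˢ B)) atTop (𝓝 (ρ' (A ×ˢ B))))
    {f : X × Y → ℝ} (hf : Continuous f) :
    Tendsto (fun n => ∫ p, f p ∂ρ n) atTop (𝓝 (∫ p, f p ∂ρ')) := by
  obtain ⟨x, y⟩ := (nonempty_of_isProbabilityMeasure ρ').some
  have : Nonempty X := ⟨x⟩
  have : Nonempty Y := ⟨y⟩
  rw [Metric.tendsto_atTop]
  intro ε hε
  obtain ⟨δ, hδ, hfδ⟩ := Metric.uniformContinuous_iff.1
    (CompactSpace.uniformContinuous_of_continuous hf) (ε / 3) (by positivity)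
  obtain ⟨s, hs⟩ := SimpleFunc.exists_forall_dist_lt (X := X) hδ
  obtain ⟨t, ht⟩ := SimpleFunc.exists_forall_dist_lt (X := Y) hδ
  let F : SimpleFunc (X × Y) ℝ :=
    ((s.comp Prod.fst measurable_fst).pair (t.comp Prod.snd measurable_snd)).map f
  have hfF : ∀ (μ : Measure (X × Y)) [IsProbabilityMeasure μ],
      dist (∫ p, f p ∂μ) (∫ p, F p ∂μ) ≤ ε / 3 := fun μ _ =>
    dist_integral_le_of_forall_dist_le μ
      (hf.integrable_of_hasCompactSupport (.of_compactSpace f)) F.integrable_of_isFiniteMeasure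
      fun p => (hfδ (by simpa [Prod.dist_eq] using ⟨hs p.1, ht p.2⟩)).le
  obtain ⟨N, hN⟩ := Metric.tendsto_atTop.1
    (tendsto_integral_comp_simpleFunc_prod h s t f) (ε / 3) (by positivity)
  refine ⟨N, fun n hn => ?_⟩
  calc dist (∫ p, f p ∂ρ n) (∫ p, f p ∂ρ')
      ≤ dist (∫ p, f p ∂ρ n) (∫ p, F p ∂ρ n) + dist (∫ p, F p ∂ρ n) (∫ p, F p ∂ρ')
        + dist (∫ p, f p ∂ρ') (∫ p, F p ∂ρ') := by
        simpa only [dist_comm (∫ p, f p ∂ρ')] using dist_triangle4 _ _ _ _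
    _ < ε / 3 + ε / 3 + ε / 3 :=
      add_lt_add_of_lt_of_le (add_lt_add_of_le_of_lt (hfF _) (hN n hn)) (hfF _)
    _ = ε := by ring

end Prod

end MeasureTheory

theorem IsCondSquare.isProbabilityMeasure {X : Type*} {G : MeasurableSpace X}
    [m0 : MeasurableSpace X] {μ : Measure X} [IsProbabilityMeasure μ] {ν : Measure (X × X)}
    (hG : G ≤ m0) (hν : IsCondSquare G μ ν) : IsProbabilityMeasure ν := by
  constructor
  rw [← univ_prod_univ, hν univ univ MeasurableSet.univ MeasurableSet.univ, indicator_univ,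
    condExp_const hG]
  simp

/-- If `(G_n)` is a decreasing sequence of sub-σ-algebras with
intersection `G`, then `μ ⊠_{G_n} μ (A × B) → μ ⊠_G μ (A × B)` for all Borel sets
`A`, `B`, and `μ ⊠_{G_n} μ` converges weakly to `μ ⊠_G μ`. -/
theorem condSquare_convergence
    {X : Type*} [MetricSpace X] [CompactSpace X] [m0 : MeasurableSpace X] [BorelSpace X]
    (μ : Measure X) [IsProbabilityMeasure μ]
    (G : ℕ → MeasurableSpace X) (hG : ∀ n, G n ≤ m0) (hmono : Antitone G)
    (ν : ℕ → Measure (X × X)) (hν : ∀ n, IsCondSquare (G n) μ (ν n))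
    (lam : Measure (X × X)) (hlam : IsCondSquare (⨅ n : ℕ, G n) μ lam) :
    (∀ A B : Set X, MeasurableSet A → MeasurableSet B →
      Tendsto (fun n : ℕ => ν n (A ×ˢ B)) atTop (𝓝 (lam (A ×ˢ B)))) ∧
    ∀ f : X × X → ℝ, Continuous f →
      Tendsto (fun n : ℕ => ∫ p, f p ∂(ν n)) atTop (𝓝 (∫ p, f p ∂lam)) := by
  have hrect : ∀ A B : Set X, MeasurableSet A → MeasurableSet B →
      Tendsto (fun n => ν n (A ×ˢ B)) atTop (𝓝 (lam (A ×ˢ B))) := by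
    intro A B hA hB
    simp only [hν _ A B hA hB, hlam A B hA hB]
    exact (ENNReal.continuous_ofReal.tendsto _).comp
      (tendsto_integral_condExp_mul_condExp_of_antitone hG hmono
        (memLp_indicator_const 2 hA 1 (.inr (measure_ne_top μ A)))
        (memLp_indicator_const 2 hB 1 (.inr (measure_ne_top μ B))))
  have := fun n => (hν n).isProbabilityMeasure (hG n)
  have := hlam.isProbabilityMeasure ((iInf_le G 0).trans (hG 0))
  exact ⟨hrect, fun f hf => tendsto_integral_of_tendsto_measure_prod hrect hf⟩
end

section
/- Let X be a compact metric space with Borel σ-algebra B, μ a Borel probability measure on X, and G a measurable partition of X. Then the set Δ_G = {(x,y) ∈ X×X : y ∈ G(x)}, where G(x) is the atom of G containing x, belongs to the product σ-algebra B⊗B, and the relatively independent square μ⊠_G μ is concentrated on Δ_G, i.e., μ⊠_G μ(Δ_G) = 1. -/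
open MeasureTheory Filter Topology Set
open scoped symmDiff Classical ENNReal NNReal

/-! On a `G`-measurable rectangle `A × B` the conditional expectations in the definition of
`μ ⊠_G μ` are the indicators themselves, so `(μ ⊠_G μ)(A × B) = μ(A ∩ B)`. Hence `A × Aᶜ` is
null for every atom `A` of `G_n`; the complement of `Δ_{G_n}` is the countable union of these
sets, and `Δ_G = ⋂ₙ Δ_{G_n}`. -/

namespace IsCondSquare

variable {X : Type*} {G : MeasurableSpace X} [m0 : MeasurableSpace X] {μ : Measure X}
  {ν : Measure (X × X)}

theorem measure_prod_of_measurableSet [IsFiniteMeasure μ] (hν : IsCondSquare G μ ν)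
    (hG : G ≤ m0) {A B : Set X} (hA : MeasurableSet[G] A) (hB : MeasurableSet[G] B) :
    ν (A ×ˢ B) = μ (A ∩ B) := by
  have hcondExp : ∀ {C : Set X}, MeasurableSet[G] C →
      μ[C.indicator (fun _ => (1 : ℝ)) | G] = C.indicator 1 := fun hC =>
    condExp_of_stronglyMeasurable hG (stronglyMeasurable_const.indicator hC)
      ((integrable_const 1).indicator (hG _ hC))
  rw [hν A B (hG _ hA) (hG _ hB), hcondExp hA, hcondExp hB, ← Pi.mul_def,
    ← Set.inter_indicator_one, integral_indicator_one ((hG _ hA).inter (hG _ hB)),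
    ofReal_measureReal]

theorem isProbabilityMeasure_s15 [IsProbabilityMeasure μ] (hν : IsCondSquare G μ ν)
    (hG : G ≤ m0) : IsProbabilityMeasure ν := by
  constructor
  rw [← Set.univ_prod_univ, hν.measure_prod_of_measurableSet hG MeasurableSet.univ
    MeasurableSet.univ, Set.inter_univ, measure_univ]

theorem ae_eq_of_measurable [IsFiniteMeasure μ] (hν : IsCondSquare G μ ν) (hG : G ≤ m0)
    {ι : Type*} [Countable ι] [MeasurableSpace ι] [MeasurableSingletonClass ι] {f : X → ι}
    (hf : Measurable[G] f) : ∀ᵐ p ∂ν, f p.2 = f p.1 := by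
  have hoff : {p : X × X | f p.2 ≠ f p.1} ⊆ ⋃ i, (f ⁻¹' {i}) ×ˢ (f ⁻¹' {i})ᶜ :=
    fun p hp => Set.mem_iUnion.2 ⟨f p.1, rfl, hp⟩
  refine measure_mono_null hoff (measure_iUnion_null fun i => ?_)
  have hfi : MeasurableSet[G] (f ⁻¹' {i}) := hf (measurableSet_singleton i)
  rw [hν.measure_prod_of_measurableSet hG hfi hfi.compl, Set.inter_compl_self, measure_empty]

end IsCondSquare

theorem condSquare_concentrated_on_partition_diagonal_general
    {X : Type*} [m0 : MeasurableSpace X]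
    (μ : Measure X) [IsProbabilityMeasure μ]
    (m : ℕ → ℕ) (g : ∀ n : ℕ, X → Fin (m n)) (hmeas : ∀ n, Measurable (g n))
    (ν : Measure (X × X))
    (hν : IsCondSquare (⨆ n : ℕ, MeasurableSpace.comap (g n) (⊤ : MeasurableSpace (Fin (m n)))) μ ν) :
    MeasurableSet {p : X × X | ∀ n : ℕ, g n p.2 = g n p.1} ∧
    ν {p : X × X | ∀ n : ℕ, g n p.2 = g n p.1} = 1 := by
  have hG : (⨆ n : ℕ, MeasurableSpace.comap (g n) (⊤ : MeasurableSpace (Fin (m n)))) ≤ m0 :=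
    iSup_le fun n => (hmeas n).comap_le
  have hΔ : MeasurableSet {p : X × X | ∀ n : ℕ, g n p.2 = g n p.1} := by
    rw [Set.ofPred_forall]
    exact .iInter fun n =>
      measurableSet_eq_fun ((hmeas n).comp measurable_snd) ((hmeas n).comp measurable_fst)
  have := hν.isProbabilityMeasure_s15 hG
  refine ⟨hΔ, ?_⟩
  rw [← measure_univ (μ := ν), ← ae_iff_measure_eq hΔ.nullMeasurableSet]
  exact ae_all_iff.2 fun n =>
    hν.ae_eq_of_measurable hG (measurable_iff_comap_le.2
      (le_iSup (fun n => MeasurableSpace.comap (g n) ⊤) n))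

/-- For a measurable partition `G` of `X`, given as the refinement
`⋁_n G_n` of an increasing sequence of finite Borel partitions (here `g n : X → Fin (m n)`
are the partition maps), the set `Δ_G = {(x,y) : y ∈ G(x)}` is in the product σ-algebra
`B ⊗ B`, and the relatively independent square `μ ⊠_G μ` is concentrated on `Δ_G`. -/
theorem condSquare_concentrated_on_partition_diagonal
    {X : Type*} [MetricSpace X] [CompactSpace X] [m0 : MeasurableSpace X] [BorelSpace X]
    (μ : Measure X) [IsProbabilityMeasure μ]
    (m : ℕ → ℕ) (g : ∀ n : ℕ, X → Fin (m n)) (hmeas : ∀ n, Measurable (g n))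
    (hmono : Monotone (fun n => MeasurableSpace.comap (g n) (⊤ : MeasurableSpace (Fin (m n)))))
    (ν : Measure (X × X))
    (hν : IsCondSquare (⨆ n : ℕ, MeasurableSpace.comap (g n) (⊤ : MeasurableSpace (Fin (m n)))) μ ν) :
    MeasurableSet {p : X × X | ∀ n : ℕ, g n p.2 = g n p.1} ∧
    ν {p : X × X | ∀ n : ℕ, g n p.2 = g n p.1} = 1 :=
  condSquare_concentrated_on_partition_diagonal_general (m0 := m0) μ m g hmeas ν hν
end

section
/- Let X be a compact metric space with Borel σ-algebra B, μ a Borel probability measure on X, F a sub-σ-algebra of B, and x ↦ μ_x a regular version of the conditional probability of μ given F (an F-measurable map from X to the space of Borel probability measures on X such that E(f | F)(x) = ∫ f dμ_x for μ-almost every x, for every bounded Borel function f). Then μ⊠_F μ(Δ) = 0, where Δ is the diagonal of X×X, if and only if μ_x is atomless for μ-almost all x ∈ X. -/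
open MeasureTheory Filter Topology Set
open scoped symmDiff Classical ENNReal NNReal

/-!
Since rectangles generate the product σ-algebra, the identity
`μ ⊠_F μ (A × B) = ∫ μ_x(A) μ_x(B) dμ(x)` identifies `μ ⊠_F μ` with the mixture
`∫ μ_x ⊗ μ_x dμ(x)`. The slices of the diagonal are singletons, so `μ_x ⊗ μ_x` charges the
diagonal exactly when `μ_x` has an atom.
-/

open ProbabilityTheory

namespace MeasureTheory.Measure

variable {X : Type*} [MeasurableSpace X]

lemma prod_self_diagonal_eq_zero_iff [MeasurableEq X] (ρ : Measure X) [SFinite ρ] :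
    ρ.prod ρ (diagonal X) = 0 ↔ ∀ y, ρ {y} = 0 := by
  constructor
  · intro h y
    have h_sq : ρ {y} * ρ {y} ≤ ρ.prod ρ (diagonal X) := by
      rw [← prod_prod]
      exact measure_mono fun p ⟨h₁, h₂⟩ => h₁.trans h₂.symm
    simpa [h] using h_sq
  · intro h
    have h_slice : ∀ y, Prod.mk y ⁻¹' diagonal X = {y} := fun y => by ext; simp [eq_comm]
    simp [prod_apply measurableSet_diagonal, h_slice, h]

end MeasureTheory.Measure

namespace ProbabilityTheory.Kernel

variable {X : Type*} [MeasurableSpace X] (κ : Kernel X X) [IsSFiniteKernel κ] (μ : Measure X)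

lemma comp_prod_self_apply_prod {A B : Set X} (hA : MeasurableSet A) (hB : MeasurableSet B) :
    ((κ ×ₖ κ) ∘ₘ μ) (A ×ˢ B) = ∫⁻ x, κ x A * κ x B ∂μ := by
  simp_rw [Measure.bind_apply (hA.prod hB) (κ ×ₖ κ).aemeasurable, prod_apply_prod]

lemma comp_prod_self_diagonal_eq_zero_iff [MeasurableEq X] :
    ((κ ×ₖ κ) ∘ₘ μ) (diagonal X) = 0 ↔ ∀ᵐ x ∂μ, ∀ y, κ x {y} = 0 := by
  rw [Measure.bind_apply measurableSet_diagonal (κ ×ₖ κ).aemeasurable,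
    lintegral_eq_zero_iff ((κ ×ₖ κ).measurable_coe measurableSet_diagonal)]
  refine eventually_congr (Eventually.of_forall fun x => ?_)
  simp only [Pi.zero_apply, prod_apply]
  exact Measure.prod_self_diagonal_eq_zero_iff (κ x)

end ProbabilityTheory.Kernel

lemma IsCondSquare.eq_comp_prod_self {X : Type*} {F : MeasurableSpace X} [MeasurableSpace X]
    {μ : Measure X} [IsFiniteMeasure μ] {ν : Measure (X × X)} (hν : IsCondSquare F μ ν)
    (κ : Kernel X X) [IsFiniteKernel κ]
    (hκ : ∀ A, MeasurableSet A →
      μ[A.indicator (fun _ => (1 : ℝ)) | F] =ᵐ[μ] fun x => (κ x A).toReal) :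
    ν = (κ ×ₖ κ) ∘ₘ μ := by
  refine (Measure.ext_prod fun {A B} hA hB => ?_).symm
  have h_fin : ∫⁻ x, κ x A * κ x B ∂μ ≠ ∞ :=
    κ.comp_prod_self_apply_prod μ hA hB ▸ measure_ne_top _ _
  have h_ae : (fun x => μ[A.indicator (fun _ => (1 : ℝ)) | F] x *
      μ[B.indicator (fun _ => (1 : ℝ)) | F] x) =ᵐ[μ] fun x => (κ x A * κ x B).toReal := by
    filter_upwards [hκ A hA, hκ B hB] with x hxA hxB
    rw [hxA, hxB, ENNReal.toReal_mul]
  rw [hν A B hA hB, integral_congr_ae h_ae, κ.comp_prod_self_apply_prod μ hA hB]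
  have h_meas : AEMeasurable (fun x => κ x A * κ x B) μ :=
    ((κ.measurable_coe hA).mul (κ.measurable_coe hB)).aemeasurable
  rw [integral_toReal h_meas (ae_lt_top' h_meas h_fin), ENNReal.ofReal_toReal h_fin]

/-- Let `x ↦ μ_x` be a regular version of the conditional probability
of `μ` given a sub-σ-algebra `F`. Then `μ ⊠_F μ` vanishes on the diagonal of `X × X` if
and only if `μ_x` is atomless for `μ`-almost all `x`. -/
theorem condSquare_diagonal_null_iff_atomless
    {X : Type*} (F : MeasurableSpace X) [MetricSpace X] [CompactSpace X]
    [m0 : MeasurableSpace X] [BorelSpace X]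
    (μ : Measure X) [IsProbabilityMeasure μ] (hF : F ≤ m0)
    (μx : X → Measure X) (hprob : ∀ x, IsProbabilityMeasure (μx x))
    (hmeas : ∀ A : Set X, MeasurableSet A → Measurable[F] fun x => (μx x A).toReal)
    (hcond : ∀ f : X → ℝ, Measurable f → (∃ C : ℝ, ∀ x, |f x| ≤ C) →
      (fun x => ∫ y, f y ∂(μx x)) =ᵐ[μ] μ[f|F])
    (ν : Measure (X × X)) (hν : IsCondSquare F μ ν) :
    ν {p : X × X | p.1 = p.2} = 0 ↔ ∀ᵐ x ∂μ, ∀ y : X, μx x {y} = 0 := by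
  have hμx_meas : ∀ A, MeasurableSet A → Measurable fun x => μx x A := by
    intro A hA
    convert ((hmeas A hA).mono hF le_rfl).ennreal_ofReal with x
    have := hprob x
    exact (ENNReal.ofReal_toReal (measure_ne_top _ _)).symm
  let κ : Kernel X X := ⟨μx, Measure.measurable_of_measurable_coe μx hμx_meas⟩
  have : IsMarkovKernel κ := ⟨hprob⟩
  have hκ : ∀ A, MeasurableSet A →
      μ[A.indicator (fun _ => (1 : ℝ)) | F] =ᵐ[μ] fun x => (κ x A).toReal := fun A hA =>
    have h_bdd : ∀ x, |A.indicator (fun _ => (1 : ℝ)) x| ≤ 1 := fun x => by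
      by_cases hx : x ∈ A <;> simp [hx]
    (hcond _ (measurable_const.indicator hA) ⟨1, h_bdd⟩).symm.trans <|
      Eventually.of_forall fun x => integral_indicator_one hA
  rw [hν.eq_comp_prod_self κ hκ]
  exact κ.comp_prod_self_diagonal_eq_zero_iff μ
end
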